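/- Let G be a finite simple graph, d a non-negative integer, and N ⊆ V(G) a set of vertices such that every two distinct vertices u, v ∈ N are joined in G by d + 2 pairwise internally vertex-disjoint paths. Then every set S ⊆ V(G) with |S| ≤ d such that G − S is acyclic contains all vertices of N except at most one. -/

import Mathlib

/-!
Suppose two distinct vertices `u, v ∈ N` both lie outside `S`. Since the `d + 2` paths from `u`
to `v` are internally disjoint and `u, v ∉ S`, each vertex of `S` lies on at most one of them, so
at most `|S| ≤ d` of the paths meet `S`. The two remaining paths are distinct `u`–`v` paths in the
forest `G − S`, which is impossible.
-/

namespace Set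

open Function in
theorem ncard_setOf_nonempty_le_of_pairwise_disjoint {ι α : Type*} {B : ι → Set α} {S : Set α}
    (hS : S.Finite) (hBS : ∀ i, B i ⊆ S) (hB : Pairwise (Disjoint on B)) :
    {i | (B i).Nonempty}.ncard ≤ S.ncard := by
  classical
  rcases S.eq_empty_or_nonempty with rfl | ⟨x₀, -⟩
  · simp [subset_empty_iff.mp (hBS _)]
  refine ncard_le_ncard_of_injOn (fun i ↦ if h : (B i).Nonempty then h.some else x₀)
    (fun i (hi : (B i).Nonempty) ↦ ?_)
    (fun i (hi : (B i).Nonempty) j (hj : (B j).Nonempty) hij ↦ ?_) hS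
  · simpa only [dif_pos hi] using hBS i hi.some_mem
  · simp only [dif_pos hi, dif_pos hj] at hij
    by_contra hne
    exact (hB hne).ne_of_mem hi.some_mem hj.some_mem hij

end Set

namespace SimpleGraph

variable {V : Type*} {G : SimpleGraph V}

theorem IsAcyclic.path_eq_of_support_subset {s : Set V} (hs : (G.induce s).IsAcyclic)
    {u v : V} {p q : G.Walk u v} (hp : p.IsPath) (hq : q.IsPath)
    (hps : ∀ x ∈ p.support, x ∈ s) (hqs : ∀ x ∈ q.support, x ∈ s) : p = q := by
  have hpath (w : G.Walk u v) (hw : w.IsPath) (hws) : (w.induce s hws).IsPath :=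
    Walk.IsPath.of_map (f := (Embedding.induce s).toHom) (by rwa [Walk.map_induce])
  have := (hs.subsingleton_path _ _).elim ⟨_, hpath p hp hps⟩ ⟨_, hpath q hq hqs⟩
  rw [← Walk.map_induce p hps, ← Walk.map_induce q hqs, Subtype.mk.inj this]

theorem ncard_setOf_path_meets_le {ι : Type*} {u v : V} (p : ι → G.Path u v)
    (hp : ∀ i j, i ≠ j → ∀ x, x ∈ (p i).1.support → x ∈ (p j).1.support → x = u ∨ x = v)
    {S : Set V} (hS : S.Finite) (hu : u ∉ S) (hv : v ∉ S) :
    {i | ∃ x ∈ S, x ∈ (p i).1.support}.ncard ≤ S.ncard := by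
  refine le_of_eq_of_le ?_ (Set.ncard_setOf_nonempty_le_of_pairwise_disjoint
    (B := fun i ↦ {x ∈ S | x ∈ (p i).1.support}) hS (fun i ↦ Set.sep_subset _ _) ?_)
  · simp [Set.Nonempty]
  · intro i j hij
    refine Set.disjoint_left.mpr fun x ⟨hxS, hxi⟩ ⟨_, hxj⟩ ↦ ?_
    rcases hp i j hij x hxi hxj with rfl | rfl
    exacts [hu hxS, hv hxS]

end SimpleGraph

/-- Let `N` be a set of vertices such that every two distinct `u, v ∈ N` are joined by
`d + 2` pairwise internally vertex-disjoint (distinct) paths. Then every set `S` of at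
most `d` vertices such that `G − S` is acyclic contains all vertices of `N` except at
most one. -/
theorem all_but_one_of_many_disjoint_paths {V : Type*} [Fintype V] (G : SimpleGraph V)
    (d : ℕ) (N : Set V)
    (hN : ∀ u ∈ N, ∀ v ∈ N, u ≠ v →
      ∃ p : Fin (d + 2) → G.Path u v, Function.Injective p ∧
        ∀ i j, i ≠ j → ∀ x, x ∈ (p i).1.support → x ∈ (p j).1.support → x = u ∨ x = v)
    (S : Set V) (hS : S.ncard ≤ d) (hac : (G.induce Sᶜ).IsAcyclic) :
    (N \ S).Subsingleton := by
  rintro u ⟨huN, huS⟩ v ⟨hvN, hvS⟩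
  by_contra huv
  obtain ⟨p, hinj, hdisj⟩ := hN u huN v hvN huv
  set T := {i | ∃ x ∈ S, x ∈ (p i).1.support}
  have hT : T.ncard ≤ d :=
    (SimpleGraph.ncard_setOf_path_meets_le p hdisj S.toFinite huS hvS).trans hS
  have hTc : 1 < Tᶜ.ncard := by
    have := T.ncard_add_ncard_compl
    simp only [Nat.card_eq_fintype_card, Fintype.card_fin] at this
    omega
  obtain ⟨i, hi, j, hj, hij⟩ := Set.one_lt_ncard_iff_nontrivial.mp hTc
  have avoids (k) (hk : k ∈ Tᶜ) : ∀ x ∈ (p k).1.support, x ∈ Sᶜ := fun x hx hxS ↦ hk ⟨x, hxS, hx⟩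
  exact hij <| hinj <| Subtype.ext <|
    hac.path_eq_of_support_subset (p i).2 (p j).2 (avoids i hi) (avoids j hj)
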